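/- arXiv:2106.05833 — 5 statements merged into one kernel-verified Lean document; each statement's English description precedes it below -/
import Mathlib

section
/- Let S be a finite set and let f be a real-valued set function on subsets of S that is non-decreasing (f(A ∪ {x}) ≥ f(A) for all A ⊆ S and x ∈ S), submodular (f(A ∪ {x}) − f(A) ≥ f(B ∪ {x}) − f(B) for all A ⊆ B ⊆ S and x ∈ S \ B). Let X_0 = ∅ and, for each step, X_{j+1} = X_j ∪ {x_{j+1}} where x_{j+1} ∈ S maximizes f(X_j ∪ {x}) over all x ∈ S. Then for every k with 1 ≤ k ≤ |S|, the greedy set X_k of size k satisfies f*_k − f(X_k) ≤ (1 − 1/k)^k · (f*_k − f(∅)), where f*_k = max{f(A) : A ⊆ S, |A| ≤ k}; moreover (1 − 1/k)^k ≤ 1/e. -/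
/-- **Nemhauser–Wolsey–Fisher bound for greedy maximization of a non-decreasing
submodular set function.**  `S` is a finite set, `f` a non-decreasing submodular
real-valued set function on subsets of `S`, `X` the greedy sequence starting
from `∅`, and `fstar` the maximal value of `f` over subsets of `S` of
cardinality at most `k`.  Then the optimality gap of the greedy set of size `k`
is at most `(1 - 1/k)^k ≤ 1/e` times the initial gap. -/
theorem greedy_submodular_optimality_gap
    {α : Type*} [DecidableEq α] (S : Finset α) (f : Finset α → ℝ)
    (hmono : ∀ A : Finset α, A ⊆ S → ∀ x ∈ S, f A ≤ f (insert x A))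
    (hsub : ∀ A B : Finset α, A ⊆ B → B ⊆ S → ∀ x ∈ S, x ∉ B →
      f (insert x B) - f B ≤ f (insert x A) - f A)
    (X : ℕ → Finset α) (hX0 : X 0 = ∅)
    (hgreedy : ∀ j : ℕ, ∃ x ∈ S, X (j + 1) = insert x (X j) ∧
      ∀ y ∈ S, f (insert y (X j)) ≤ f (insert x (X j)))
    (k : ℕ) (hk1 : 1 ≤ k) (hk2 : k ≤ S.card) (hcard : (X k).card = k)
    (fstar : ℝ)
    (hfstar : IsGreatest {v : ℝ | ∃ A : Finset α, A ⊆ S ∧ A.card ≤ k ∧ f A = v} fstar) :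
    fstar - f (X k) ≤ (1 - 1 / (k : ℝ)) ^ k * (fstar - f (∅ : Finset α)) ∧
      (1 - 1 / (k : ℝ)) ^ k ≤ 1 / Real.exp 1 := by
  have hk0 : (0:ℝ) < (k:ℝ) := by exact_mod_cast hk1
  have hb : (0:ℝ) ≤ 1 - 1/(k:ℝ) := by
    rw [sub_nonneg, div_le_one hk0]
    exact_mod_cast hk1
  -- X j ⊆ S for all j
  have hXS : ∀ j, X j ⊆ S := by
    intro j; induction j with
    | zero => simp [hX0]
    | succ n ih =>
      obtain ⟨x, hxS, hXn, -⟩ := hgreedy n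
      rw [hXn]; exact Finset.insert_subset hxS ih
  -- monotonicity on supersets
  have hmono' : ∀ C : Finset α, C ⊆ S → ∀ A : Finset α, A ⊆ S → f A ≤ f (A ∪ C) := by
    intro C
    induction C using Finset.induction_on with
    | empty => intro _ A _; simp
    | @insert c C' hc ih =>
      intro hC A hA
      have hcS : c ∈ S := hC (Finset.mem_insert_self _ _)
      have hC' : C' ⊆ S := (Finset.insert_subset_iff.mp hC).2
      have h1 : f A ≤ f (A ∪ C') := ih hC' A hA
      have h2 : f (A ∪ C') ≤ f (insert c (A ∪ C')) :=
        hmono _ (Finset.union_subset hA hC') c hcS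
      calc f A ≤ f (insert c (A ∪ C')) := h1.trans h2
        _ = f (A ∪ insert c C') := by rw [Finset.union_insert]
  -- marginal gains bound
  have hmarg : ∀ A : Finset α, A ⊆ S → ∀ T : Finset α, T ⊆ S →
      f (A ∪ T) - f T ≤ ∑ x ∈ A \ T, (f (insert x T) - f T) := by
    intro A
    induction A using Finset.induction_on with
    | empty => intro _ T _; simp
    | @insert a A' ha ih =>
      intro hA T hT
      have haS : a ∈ S := hA (Finset.mem_insert_self _ _)
      have hA' : A' ⊆ S := (Finset.insert_subset_iff.mp hA).2
      have ihT := ih hA' T hT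
      by_cases hax : a ∈ T
      · have h1 : insert a A' ∪ T = A' ∪ T := by
          rw [Finset.insert_union, Finset.insert_eq_self.mpr (Finset.mem_union_right _ hax)]
        have h2 : (insert a A') \ T = A' \ T := Finset.insert_sdiff_of_mem _ hax
        rw [h1, h2]; exact ihT
      · have h2 : (insert a A') \ T = insert a (A' \ T) :=
          Finset.insert_sdiff_of_notMem _ hax
        have haA : a ∉ A' \ T := fun h => ha (Finset.mem_sdiff.mp h).1
        rw [h2, Finset.sum_insert haA, Finset.insert_union]
        by_cases haU : a ∈ A' ∪ T
        · have hEq : insert a (A' ∪ T) = A' ∪ T := Finset.insert_eq_self.mpr haU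
          have hmono2 := hmono T hT a haS
          rw [hEq]
          linarith
        · have hs := hsub T (A' ∪ T) Finset.subset_union_right
            (Finset.union_subset hA' hT) a haS haU
          linarith
  -- per-step contraction
  have hstep : ∀ j, fstar - f (X (j+1)) ≤ (1 - 1/(k:ℝ)) * (fstar - f (X j)) := by
    intro j
    obtain ⟨A, hAS, hAk, hAf⟩ := hfstar.1
    obtain ⟨x, hxS, hXs, hmax⟩ := hgreedy j
    have hXjS := hXS j
    set d := f (X (j+1)) - f (X j) with hd
    have hd0 : 0 ≤ d := by
      have := hmono (X j) hXjS x hxS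
      rw [hd, hXs]; linarith
    have hterm : ∀ y ∈ A \ X j, f (insert y (X j)) - f (X j) ≤ d := by
      intro y hy
      have hyS : y ∈ S := hAS (Finset.mem_sdiff.mp hy).1
      have := hmax y hyS
      rw [hd, hXs]; linarith
    have hsum : ∑ y ∈ A \ X j, (f (insert y (X j)) - f (X j)) ≤ (A \ X j).card * d :=
      by
        calc ∑ y ∈ A \ X j, (f (insert y (X j)) - f (X j))
            ≤ ∑ _y ∈ A \ X j, d := Finset.sum_le_sum hterm
          _ = (A \ X j).card * d := by rw [Finset.sum_const, nsmul_eq_mul]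
    have hcard' : ((A \ X j).card : ℝ) ≤ (k:ℝ) := by
      have : (A \ X j).card ≤ A.card := Finset.card_le_card (Finset.sdiff_subset)
      exact_mod_cast le_trans this hAk
    have hsum2 : ∑ y ∈ A \ X j, (f (insert y (X j)) - f (X j)) ≤ (k:ℝ) * d := by
      calc ∑ y ∈ A \ X j, (f (insert y (X j)) - f (X j)) ≤ (A \ X j).card * d := hsum
        _ ≤ (k:ℝ) * d := mul_le_mul_of_nonneg_right hcard' hd0
    have h1 : fstar ≤ f (A ∪ X j) := by
      rw [← hAf]; exact hmono' (X j) hXjS A hAS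
    have h2 := hmarg A hAS (X j) hXjS
    have hg : fstar - f (X j) ≤ (k:ℝ) * d := by linarith
    have h3 : (fstar - f (X j)) / (k:ℝ) ≤ d := by
      rw [div_le_iff₀ hk0]; linarith
    have h4 : (1 - 1/(k:ℝ)) * (fstar - f (X j)) =
        (fstar - f (X j)) - (fstar - f (X j)) / (k:ℝ) := by ring
    rw [h4]
    have : fstar - f (X (j+1)) = (fstar - f (X j)) - d := by rw [hd]; ring
    linarith
  -- iterate
  have hiter : ∀ j, fstar - f (X j) ≤ (1 - 1/(k:ℝ))^j * (fstar - f (X 0)) := by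
    intro j; induction j with
    | zero => simp
    | succ n ih =>
      calc fstar - f (X (n+1)) ≤ (1 - 1/(k:ℝ)) * (fstar - f (X n)) := hstep n
        _ ≤ (1 - 1/(k:ℝ)) * ((1 - 1/(k:ℝ))^n * (fstar - f (X 0))) :=
            mul_le_mul_of_nonneg_left ih hb
        _ = (1 - 1/(k:ℝ))^(n+1) * (fstar - f (X 0)) := by ring
  constructor
  · have := hiter k
    rwa [hX0] at this
  · have h1 : 1 - 1/(k:ℝ) ≤ Real.exp (-(1/(k:ℝ))) := by
      have := Real.add_one_le_exp (-(1/(k:ℝ)))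
      linarith
    have h2 : (1 - 1/(k:ℝ))^k ≤ Real.exp (-(1/(k:ℝ)))^k := pow_le_pow_left₀ hb h1 k
    have hkne : (k:ℝ) ≠ 0 := ne_of_gt hk0
    have h3 : Real.exp (-(1/(k:ℝ)))^k = Real.exp (-1) := by
      rw [← Real.exp_nat_mul]
      congr 1
      field_simp
    rw [h3] at h2
    rw [Real.exp_neg, ← one_div] at h2
    exact h2
end

section
/- Let S be a finite set and let f be a non-decreasing submodular real-valued set function on subsets of S. If X_k is the set of size k produced by the greedy algorithm (repeatedly adding an element of S maximizing f of the augmented set), then for every k ≥ 1, f(X_k) − f(∅) ≥ (1 − 1/e) · (f*_k − f(∅)), where f*_k = max{f(A) : A ⊆ S, |A| ≤ k}; in particular the greedy solution has efficiency greater than 63.2% for every k. -/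
/-!
Let `A` be an optimal set with `|A| ≤ k` and `g j = f A - f (X j)` the remaining gap. By
monotonicity and submodularity, `f A - f (X j)` is at most the sum of the marginal gains of the
elements of `A` at `X j`, each of which is at most the greedy gain; hence
`g j ≤ k (g j - g (j + 1))`, i.e. `g (j + 1) ≤ (1 - 1/k) g j`. After `k` steps the gap has shrunk
by `(1 - 1/k)^k ≤ 1/e`.
-/

open Finset

section Greedy

variable {α : Type*} [DecidableEq α]

def MonotoneOnPowerset (S : Finset α) (f : Finset α → ℝ) : Prop :=
  ∀ A : Finset α, A ⊆ S → ∀ x ∈ S, f A ≤ f (insert x A)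

def SubmodularOnPowerset (S : Finset α) (f : Finset α → ℝ) : Prop :=
  ∀ A B : Finset α, A ⊆ B → B ⊆ S → ∀ x ∈ S, x ∉ B →
    f (insert x B) - f B ≤ f (insert x A) - f A

def IsGreedySequence (S : Finset α) (f : Finset α → ℝ) (X : ℕ → Finset α) : Prop :=
  X 0 = ∅ ∧ ∀ j : ℕ, ∃ x ∈ S, X (j + 1) = insert x (X j) ∧
    ∀ y ∈ S, f (insert y (X j)) ≤ f (insert x (X j))

variable {S : Finset α} {f : Finset α → ℝ}

theorem MonotoneOnPowerset.le_union (hf : MonotoneOnPowerset S f) {B T : Finset α}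
    (hB : B ⊆ S) (hT : T ⊆ S) : f B ≤ f (B ∪ T) := by
  induction T using Finset.induction_on with
  | empty => simp
  | insert a T _ ih =>
    rw [insert_subset_iff] at hT
    rw [union_insert]
    exact (ih hT.2).trans (hf _ (union_subset hB hT.2) a hT.1)

theorem SubmodularOnPowerset.union_sub_le_sum (hf : SubmodularOnPowerset S f) {B T : Finset α}
    (hB : B ⊆ S) (hT : T ⊆ S) : f (B ∪ T) - f B ≤ ∑ a ∈ T, (f (insert a B) - f B) := by
  induction T using Finset.induction_on with
  | empty => simp
  | insert a T haT ih =>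
    rw [insert_subset_iff] at hT
    rw [union_insert, sum_insert haT]
    have hgain : f (insert a (B ∪ T)) - f (B ∪ T) ≤ f (insert a B) - f B := by
      by_cases haB : a ∈ B
      · simp [haB]
      · exact hf B (B ∪ T) subset_union_left (union_subset hB hT.2) a hT.1 (by simp [haB, haT])
    linarith [ih hT.2]

theorem sub_le_mul_greedy_gain (hmono : MonotoneOnPowerset S f)
    (hsub : SubmodularOnPowerset S f) {A B : Finset α} {x : α} {k : ℕ}
    (hA : A ⊆ S) (hAk : A.card ≤ k) (hB : B ⊆ S) (hx : x ∈ S)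
    (hxmax : ∀ y ∈ S, f (insert y B) ≤ f (insert x B)) :
    f A - f B ≤ k * (f (insert x B) - f B) := by
  have hgain_nonneg : 0 ≤ f (insert x B) - f B := sub_nonneg.mpr (hmono B hB x hx)
  calc f A - f B ≤ f (B ∪ A) - f B := by
        gcongr; simpa [union_comm] using hmono.le_union hA hB
    _ ≤ ∑ a ∈ A, (f (insert a B) - f B) := hsub.union_sub_le_sum hB hA
    _ ≤ ∑ _a ∈ A, (f (insert x B) - f B) := sum_le_sum fun a ha => by linarith [hxmax a (hA ha)]
    _ = A.card * (f (insert x B) - f B) := by rw [sum_const, nsmul_eq_mul]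
    _ ≤ k * (f (insert x B) - f B) := by gcongr

theorem IsGreedySequence.subset {X : ℕ → Finset α} (hX : IsGreedySequence S f X) (j : ℕ) :
    X j ⊆ S := by
  induction j with
  | zero => simp [hX.1]
  | succ j ih =>
    obtain ⟨x, hx, hstep, -⟩ := hX.2 j
    exact hstep ▸ insert_subset hx ih

theorem IsGreedySequence.gap_le (hmono : MonotoneOnPowerset S f)
    (hsub : SubmodularOnPowerset S f) {X : ℕ → Finset α} (hX : IsGreedySequence S f X)
    {A : Finset α} {k : ℕ} (hA : A ⊆ S) (hAk : A.card ≤ k) (j : ℕ) :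
    f A - f (X j) ≤ k * ((f A - f (X j)) - (f A - f (X (j + 1)))) := by
  obtain ⟨x, hx, hstep, hxmax⟩ := hX.2 j
  rw [hstep, sub_sub_sub_cancel_left]
  exact sub_le_mul_greedy_gain hmono hsub hA hAk (hX.subset j) hx hxmax

end Greedy

theorem le_one_sub_inv_pow_mul_of_le_mul_sub {g : ℕ → ℝ} {k : ℝ} (hk : 1 ≤ k)
    (h : ∀ j, g j ≤ k * (g j - g (j + 1))) (n : ℕ) : g n ≤ (1 - 1 / k) ^ n * g 0 := by
  have hk0 : 0 < k := by linarith
  have hc : 0 ≤ 1 - 1 / k := by rw [sub_nonneg, div_le_one hk0]; exact hk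
  induction n with
  | zero => simp
  | succ n ih =>
    have hstep : g (n + 1) ≤ (1 - 1 / k) * g n := by
      rw [show (1 - 1 / k) * g n = g n - g n / k by ring, le_sub_comm, div_le_iff₀ hk0]
      linarith [h n]
    calc g (n + 1) ≤ (1 - 1 / k) * g n := hstep
      _ ≤ (1 - 1 / k) * ((1 - 1 / k) ^ n * g 0) := mul_le_mul_of_nonneg_left ih hc
      _ = (1 - 1 / k) ^ (n + 1) * g 0 := by ring

theorem one_sub_inv_exp_one_gt : (0.632 : ℝ) < 1 - 1 / Real.exp 1 := by
  rw [one_div, ← Real.exp_neg]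
  linarith [Real.exp_neg_one_lt_d9]

theorem greedy_submodular_efficiency_general
    {α : Type*} [DecidableEq α] (S : Finset α) (f : Finset α → ℝ)
    (hmono : ∀ A : Finset α, A ⊆ S → ∀ x ∈ S, f A ≤ f (insert x A))
    (hsub : ∀ A B : Finset α, A ⊆ B → B ⊆ S → ∀ x ∈ S, x ∉ B →
      f (insert x B) - f B ≤ f (insert x A) - f A)
    (X : ℕ → Finset α) (hX0 : X 0 = ∅)
    (hgreedy : ∀ j : ℕ, ∃ x ∈ S, X (j + 1) = insert x (X j) ∧
      ∀ y ∈ S, f (insert y (X j)) ≤ f (insert x (X j)))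
    (k : ℕ) (hk1 : 1 ≤ k)
    (fstar : ℝ)
    (hfstar : IsGreatest {v : ℝ | ∃ A : Finset α, A ⊆ S ∧ A.card ≤ k ∧ f A = v} fstar) :
    (1 - 1 / Real.exp 1) * (fstar - f (∅ : Finset α)) ≤ f (X k) - f (∅ : Finset α) ∧
      (0.632 : ℝ) < 1 - 1 / Real.exp 1 := by
  refine ⟨?_, one_sub_inv_exp_one_gt⟩
  obtain ⟨⟨A, hA, hAk, rfl⟩, hmax⟩ := hfstar
  have hk : (1 : ℝ) ≤ k := by exact_mod_cast hk1
  have hX : IsGreedySequence S f X := ⟨hX0, hgreedy⟩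
  have hdecay := le_one_sub_inv_pow_mul_of_le_mul_sub hk (hX.gap_le hmono hsub hA hAk) k
  have hpow : (1 - 1 / (k : ℝ)) ^ k ≤ Real.exp (-1) := Real.one_sub_div_pow_le_exp_neg hk
  have hempty : f ∅ ≤ f A := hmax ⟨∅, empty_subset S, by simp, rfl⟩
  rw [hX0] at hdecay
  rw [one_div, ← Real.exp_neg]
  linarith [mul_le_mul_of_nonneg_right hpow (sub_nonneg.mpr hempty)]

/-- **(1 − 1/e)-efficiency of the greedy algorithm for non-decreasing submodular
set functions.**  If `X k` is the size-`k` set produced by the greedy algorithm on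
a non-decreasing submodular set function `f` over the finite set `S`, and `fstar`
is the maximum of `f` over subsets of `S` with at most `k` elements, then
`f (X k) − f ∅ ≥ (1 − 1/e) (fstar − f ∅)`; in particular the efficiency factor
`1 − 1/e` exceeds `63.2%`. -/
theorem greedy_submodular_efficiency
    {α : Type*} [DecidableEq α] (S : Finset α) (f : Finset α → ℝ)
    (hmono : ∀ A : Finset α, A ⊆ S → ∀ x ∈ S, f A ≤ f (insert x A))
    (hsub : ∀ A B : Finset α, A ⊆ B → B ⊆ S → ∀ x ∈ S, x ∉ B →
      f (insert x B) - f B ≤ f (insert x A) - f A)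
    (X : ℕ → Finset α) (hX0 : X 0 = ∅)
    (hgreedy : ∀ j : ℕ, ∃ x ∈ S, X (j + 1) = insert x (X j) ∧
      ∀ y ∈ S, f (insert y (X j)) ≤ f (insert x (X j)))
    (k : ℕ) (hk1 : 1 ≤ k) (hcard : (X k).card = k)
    (fstar : ℝ)
    (hfstar : IsGreatest {v : ℝ | ∃ A : Finset α, A ⊆ S ∧ A.card ≤ k ∧ f A = v} fstar) :
    (1 - 1 / Real.exp 1) * (fstar - f (∅ : Finset α)) ≤ f (X k) - f (∅ : Finset α) ∧
      (0.632 : ℝ) < 1 - 1 / Real.exp 1 :=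
  greedy_submodular_efficiency_general S f hmono hsub X hX0 hgreedy k hk1 fstar hfstar
end

section
/- Let X be a compact subset of ℝ^d and let X_n = {x_1,…,x_n} be the n-point prefix of a coffee-house (greedy maximin) sequence: x_1 ∈ X arbitrary and x_{k+1} ∈ argmax_{x∈X} d(x, X_k). Then for all n ≥ 1, CR(X_n) ≤ 2 · CR*_n, i.e., 1/2 ≤ CR*_n / CR(X_n) ≤ 1, where CR*_n = min over all n-point sets Z ⊆ X of CR(Z). This holds irrespective of the choice of x_1. -/
/-!
Greedy maximin gives a packing: each new point `x j` realises the covering radius of the prefix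
`X_j`, so the `n + 1` points `x 0, …, x n` are pairwise at distance at least `CR(X_n)`. Any
`n`-point design `Z` has two of them sharing a nearest point in `Z`, and the triangle inequality
through it gives `CR(X_n) ≤ 2 CR(Z)`. If the prefix `X_n` has `n` distinct points it is itself an
`n`-point design, whence `CR*_n ≤ CR(X_n)`; otherwise a repeated point forces `CR(X_n) = 0`, so
`X = X_n` has fewer than `n` points and both sides vanish.
-/

open Metric

/-- The covering radius `CR(A) = sup_{x∈X} d(x,A)` of a design `A` in the domain `X`. -/
noncomputable def covRad {d : ℕ} (X A : Set (EuclideanSpace ℝ (Fin d))) : ℝ :=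
  sSup ((fun x => infDist x A) '' X)

/-- The minimal covering radius over `n`-point designs in `X`. -/
noncomputable def covRadStar {d : ℕ} (X : Set (EuclideanSpace ℝ (Fin d))) (n : ℕ) : ℝ :=
  sInf {v : ℝ | ∃ Z : Finset (EuclideanSpace ℝ (Fin d)),
    ↑Z ⊆ X ∧ Z.card = n ∧ v = covRad X ↑Z}

section PseudoMetricSpace

variable {α : Type*} [PseudoMetricSpace α]

theorem le_two_mul_of_pairwise_le_dist {ι : Type*} {t : Finset ι} {p : ι → α} {Z : Finset α}
    {r R : ℝ} (hZ : Z.Nonempty) (hcard : Z.card < t.card)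
    (hcov : ∀ i ∈ t, infDist (p i) Z ≤ R)
    (hsep : ∀ i ∈ t, ∀ j ∈ t, i ≠ j → r ≤ dist (p i) (p j)) :
    r ≤ 2 * R := by
  have hnearest : ∀ i, ∃ z ∈ Z, infDist (p i) Z = dist (p i) z := fun i =>
    Z.finite_toSet.isCompact.exists_infDist_eq_dist (Finset.coe_nonempty.mpr hZ) (p i)
  choose z hzZ hz using hnearest
  obtain ⟨i, hi, j, hj, hij, hzij⟩ :=
    Finset.exists_ne_map_eq_of_card_lt_of_maps_to hcard fun i _ => Finset.mem_coe.mpr (hzZ i)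
  calc r ≤ dist (p i) (p j) := hsep i hi j hj hij
    _ ≤ dist (p i) (z i) + dist (p j) (z j) := by
        rw [hzij, dist_comm (p j)]; exact dist_triangle _ _ _
    _ ≤ 2 * R := by rw [← hz i, ← hz j]; linarith [hcov i hi, hcov j hj]

theorem infDist_image_Iio_le_dist_of_greedy {X : Set α} {x : ℕ → α}
    (hgreedy : ∀ n, 1 ≤ n → ∀ y ∈ X,
      infDist y (x '' Set.Iio n) ≤ infDist (x n) (x '' Set.Iio n))
    {n i j : ℕ} (hi : i ≤ n) (hj : j ≤ n) (hij : i ≠ j) {y : α} (hy : y ∈ X) :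
    infDist y (x '' Set.Iio n) ≤ dist (x i) (x j) := by
  wlog hlt : i < j generalizing i j
  · rw [dist_comm]; exact this hj hi hij.symm (by omega)
  calc infDist y (x '' Set.Iio n)
      ≤ infDist y (x '' Set.Iio j) :=
        infDist_le_infDist_of_subset (Set.image_mono fun k hk => by simp at hk ⊢; omega)
          ⟨x i, i, hlt, rfl⟩
    _ ≤ infDist (x j) (x '' Set.Iio j) := hgreedy j (by omega) y hy
    _ ≤ dist (x j) (x i) := infDist_le_dist_of_mem ⟨i, hlt, rfl⟩
    _ = dist (x i) (x j) := dist_comm _ _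

end PseudoMetricSpace

section CoveringRadius

variable {d : ℕ} {X A : Set (EuclideanSpace ℝ (Fin d))}

theorem le_covRad (hX : IsCompact X) {y : EuclideanSpace ℝ (Fin d)} (hy : y ∈ X) :
    infDist y A ≤ covRad X A :=
  le_csSup (hX.image (continuous_infDist_pt A)).bddAbove ⟨y, hy, rfl⟩

theorem covRad_le (hX : X.Nonempty) {c : ℝ} (h : ∀ y ∈ X, infDist y A ≤ c) :
    covRad X A ≤ c :=
  csSup_le (hX.image _) (Set.forall_mem_image.mpr h)

theorem covRad_nonneg : 0 ≤ covRad X A :=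
  Real.sSup_nonneg (Set.forall_mem_image.mpr fun _ _ => infDist_nonneg)

theorem covRadStar_nonneg {n : ℕ} : 0 ≤ covRadStar X n :=
  Real.sInf_nonneg fun _ ⟨_, _, _, hv⟩ => hv ▸ covRad_nonneg

theorem covRadStar_le_covRad {n : ℕ} {Z : Finset (EuclideanSpace ℝ (Fin d))}
    (hZX : ↑Z ⊆ X) (hZ : Z.card = n) : covRadStar X n ≤ covRad X ↑Z :=
  csInf_le ⟨0, fun _ ⟨_, _, _, hv⟩ => hv ▸ covRad_nonneg⟩ ⟨Z, hZX, hZ, rfl⟩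

theorem le_covRadStar {n : ℕ} {c : ℝ} (hne : ∃ Z : Finset (EuclideanSpace ℝ (Fin d)),
      ↑Z ⊆ X ∧ Z.card = n)
    (h : ∀ Z : Finset (EuclideanSpace ℝ (Fin d)), ↑Z ⊆ X → Z.card = n → c ≤ covRad X ↑Z) :
    c ≤ covRadStar X n := by
  obtain ⟨Z, hZX, hZ⟩ := hne
  exact le_csInf ⟨_, Z, hZX, hZ, rfl⟩ fun _ ⟨Z, hZX, hZ, hv⟩ => hv ▸ h Z hZX hZ

theorem covRadStar_eq_zero_of_forall_card_ne {n : ℕ}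
    (h : ∀ Z : Finset (EuclideanSpace ℝ (Fin d)), ↑Z ⊆ X → Z.card ≠ n) :
    covRadStar X n = 0 := by
  have hempty : {v : ℝ | ∃ Z : Finset (EuclideanSpace ℝ (Fin d)),
      ↑Z ⊆ X ∧ Z.card = n ∧ v = covRad X ↑Z} = ∅ :=
    Set.eq_empty_of_forall_notMem fun _ ⟨Z, hZX, hZ, _⟩ => h Z hZX hZ
  rw [covRadStar, hempty, Real.sInf_empty]

theorem covRadStar_eq_zero_of_covRad_eq_zero (hX : IsCompact X) {n : ℕ}
    {P : Finset (EuclideanSpace ℝ (Fin d))} (hP : P.Nonempty) (hcard : P.card < n)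
    (h : covRad X ↑P = 0) : covRadStar X n = 0 := by
  have hXP : X ⊆ ↑P := fun _ hy =>
    (P.finite_toSet.isClosed.mem_iff_infDist_zero (Finset.coe_nonempty.mpr hP)).mpr <|
      le_antisymm (h ▸ le_covRad hX hy) infDist_nonneg
  exact covRadStar_eq_zero_of_forall_card_ne fun Z hZX hZ =>
    (Finset.card_le_card (Finset.coe_subset.mp (hZX.trans hXP))).not_gt (hZ ▸ hcard)

end CoveringRadius

theorem coffeeHouse_covRad_half_efficiency_general {d : ℕ}
    (X : Set (EuclideanSpace ℝ (Fin d))) (hX : IsCompact X)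
    (x : ℕ → EuclideanSpace ℝ (Fin d)) (hx0 : x 0 ∈ X)
    (hgreedy : ∀ n : ℕ, 1 ≤ n → x n ∈ X ∧ ∀ y ∈ X,
      infDist y (x '' Set.Iio n) ≤ infDist (x n) (x '' Set.Iio n)) :
    ∀ n : ℕ, 1 ≤ n →
      covRadStar X n ≤ covRad X (x '' Set.Iio n) ∧
      covRad X (x '' Set.Iio n) ≤ 2 * covRadStar X n := by
  classical
  intro n hn
  have hmem : ∀ k, x k ∈ X := fun k => k.eq_zero_or_pos.elim (· ▸ hx0) fun hk => (hgreedy k hk).1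
  have hsep : ∀ i ∈ Finset.range (n + 1), ∀ j ∈ Finset.range (n + 1), i ≠ j →
      covRad X (x '' Set.Iio n) ≤ dist (x i) (x j) := fun i hi j hj hij =>
    covRad_le ⟨_, hx0⟩ fun y hy => infDist_image_Iio_le_dist_of_greedy
      (fun k hk => (hgreedy k hk).2) (Finset.mem_range_succ_iff.mp hi)
      (Finset.mem_range_succ_iff.mp hj) hij hy
  set P := (Finset.range n).image x
  have hP : (P : Set (EuclideanSpace ℝ (Fin d))) = x '' Set.Iio n := by simp [P]
  have hPX : ↑P ⊆ X := by simp [P, Set.subset_def, hmem]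
  rw [← hP]
  rcases (Finset.card_image_le (s := Finset.range n) (f := x)).lt_or_eq with hlt | heq
  · obtain ⟨i, hi, j, hj, hij, hxij⟩ := Finset.exists_ne_map_eq_of_card_lt_of_maps_to hlt
      fun i hi => Finset.mem_image_of_mem x hi
    have hP0 : covRad X ↑P = 0 := le_antisymm (by
      simpa [hP, hxij] using hsep i (Finset.range_subset_range.mpr n.le_succ hi) j
        (Finset.range_subset_range.mpr n.le_succ hj) hij) covRad_nonneg
    have hstar : covRadStar X n = 0 := covRadStar_eq_zero_of_covRad_eq_zero hX
      ⟨x 0, Finset.mem_image_of_mem x (Finset.mem_range.mpr hn)⟩ (by simpa using hlt) hP0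
    simp [hP0, hstar]
  · rw [Finset.card_range] at heq
    refine ⟨covRadStar_le_covRad hPX heq, ?_⟩
    suffices covRad X ↑P / 2 ≤ covRadStar X n by linarith
    refine le_covRadStar ⟨P, hPX, heq⟩ fun Z _ hZ => ?_
    have := le_two_mul_of_pairwise_le_dist (Z := Z) (Finset.card_pos.mp (by omega)) (by simp [hZ])
      (fun i _ => le_covRad hX (hmem i)) (hP ▸ hsep)
    linarith

/-- **50% optimality gap of coffee-house design for the covering radius.**  If `X_n` is
the `n`-point prefix of a coffee-house (greedy maximin) sequence in a compact `X ⊂ ℝ^d`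
with nonempty interior, then `CR*_n ≤ CR(X_n) ≤ 2 CR*_n` for all `n ≥ 1`, irrespective
of the choice of the first point. -/
theorem coffeeHouse_covRad_half_efficiency {d : ℕ}
    (X : Set (EuclideanSpace ℝ (Fin d))) (hX : IsCompact X)
    (hint : (interior X).Nonempty)
    (x : ℕ → EuclideanSpace ℝ (Fin d)) (hx0 : x 0 ∈ X)
    (hgreedy : ∀ n : ℕ, 1 ≤ n → x n ∈ X ∧ ∀ y ∈ X,
      infDist y (x '' Set.Iio n) ≤ infDist (x n) (x '' Set.Iio n)) :
    ∀ n : ℕ, 1 ≤ n →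
      covRadStar X n ≤ covRad X (x '' Set.Iio n) ∧
      covRad X (x '' Set.Iio n) ≤ 2 * covRadStar X n :=
  coffeeHouse_covRad_half_efficiency_general X hX x hx0 hgreedy
end

section
/- Let X be a compact subset of ℝ^d and let X_n = {x_1,…,x_n} be the n-point prefix of a coffee-house (greedy maximin) sequence: x_1 ∈ X arbitrary and x_{k+1} ∈ argmax_{x∈X} d(x, X_k). Then for all n ≥ 2, PR(X_n) ≥ (1/2) PR*_n, i.e., 1/2 ≤ PR(X_n)/PR*_n ≤ 1, where PR*_n = max over all n-point sets Z ⊆ X of PR(Z). This holds irrespective of the choice of x_1. -/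
/-!
Let `r_m = d(x_m, X_m)` be the distance of the `m`-th greedy point to the earlier ones. By
greediness `r_m` is the covering radius of `X_m` in `X`, so `r_m` is nonincreasing in `m` and
all pairwise distances in `X_{m+1}` are at least `r_m`: `PR(X_{m+1}) ≥ r_m / 2`. Conversely,
any `m + 1` points of `X` lie in the `r_m`-balls around the `m` points of `X_m`, so two of them
share a ball and are at distance at most `2 r_m`: `PR*_{m+1} ≤ r_m`.
-/

open Metric

/-- The packing radius `PR(A) = (1/2) min{dist p q : p ≠ q ∈ A}` of a design `A`. -/
noncomputable def packRad {d : ℕ} (A : Set (EuclideanSpace ℝ (Fin d))) : ℝ :=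
  sInf {v : ℝ | ∃ p ∈ A, ∃ q ∈ A, p ≠ q ∧ v = dist p q} / 2

/-- The maximal packing radius over `n`-point designs in `X`. -/
noncomputable def packRadStar {d : ℕ} (X : Set (EuclideanSpace ℝ (Fin d))) (n : ℕ) : ℝ :=
  sSup {v : ℝ | ∃ Z : Finset (EuclideanSpace ℝ (Fin d)),
    ↑Z ⊆ X ∧ Z.card = n ∧ v = packRad (↑Z : Set (EuclideanSpace ℝ (Fin d)))}

open Set

section PackingRadius

variable {d : ℕ} {A X : Set (EuclideanSpace ℝ (Fin d))} {r : ℝ}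

lemma packRad_nonneg : 0 ≤ packRad A :=
  div_nonneg (Real.sInf_nonneg (by rintro _ ⟨p, -, q, -, -, rfl⟩; exact dist_nonneg)) zero_le_two

lemma packRad_le_half_dist {p q : EuclideanSpace ℝ (Fin d)} (hp : p ∈ A) (hq : q ∈ A)
    (hpq : p ≠ q) : packRad A ≤ dist p q / 2 := by
  refine div_le_div_of_nonneg_right (csInf_le ⟨0, ?_⟩ ⟨p, hp, q, hq, hpq, rfl⟩) zero_le_two
  rintro _ ⟨p, -, q, -, -, rfl⟩
  exact dist_nonneg

lemma half_le_packRad (hA : A.Nontrivial) (hr : ∀ p ∈ A, ∀ q ∈ A, p ≠ q → r ≤ dist p q) :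
    r / 2 ≤ packRad A := by
  obtain ⟨p, hp, q, hq, hpq⟩ := hA
  refine div_le_div_of_nonneg_right (le_csInf ⟨_, p, hp, q, hq, hpq, rfl⟩ ?_) zero_le_two
  rintro _ ⟨p, hp, q, hq, hpq, rfl⟩
  exact hr p hp q hq hpq

lemma packRad_eq_zero_of_subsingleton (hA : A.Subsingleton) : packRad A = 0 := by
  have : {v : ℝ | ∃ p ∈ A, ∃ q ∈ A, p ≠ q ∧ v = dist p q} = ∅ :=
    eq_empty_iff_forall_notMem.2 fun _ ⟨p, hp, q, hq, hpq, _⟩ => hpq (hA hp hq)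
  simp [packRad, this]

lemma packRad_le_half_diam (hX : Bornology.IsBounded X) (hAX : A ⊆ X) :
    packRad A ≤ diam X / 2 := by
  rcases A.subsingleton_or_nontrivial with hA | ⟨p, hp, q, hq, hpq⟩
  · rw [packRad_eq_zero_of_subsingleton hA]
    exact div_nonneg diam_nonneg zero_le_two
  · exact (packRad_le_half_dist hp hq hpq).trans
      (div_le_div_of_nonneg_right (dist_le_diam_of_mem hX (hAX hp) (hAX hq)) zero_le_two)

lemma packRadStar_nonneg {n : ℕ} : 0 ≤ packRadStar X n :=
  Real.sSup_nonneg (by rintro _ ⟨Z, -, -, rfl⟩; exact packRad_nonneg)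

lemma packRad_le_packRadStar (hX : Bornology.IsBounded X)
    {Z : Finset (EuclideanSpace ℝ (Fin d))} (hZX : ↑Z ⊆ X) :
    packRad (Z : Set (EuclideanSpace ℝ (Fin d))) ≤ packRadStar X Z.card := by
  refine le_csSup ⟨diam X / 2, ?_⟩ ⟨Z, hZX, rfl, rfl⟩
  rintro _ ⟨W, hWX, -, rfl⟩
  exact packRad_le_half_diam hX hWX

/-- Pigeonhole: two of the points of `Z` share a ball of radius `r` around a point of `F`. -/
lemma packRad_le_of_card_lt {F Z : Finset (EuclideanSpace ℝ (Fin d))} (hcard : F.card < Z.card)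
    (hcov : ∀ z ∈ Z, ∃ w ∈ F, dist z w ≤ r) :
    packRad (Z : Set (EuclideanSpace ℝ (Fin d))) ≤ r := by
  choose! f hfF hfdist using hcov
  obtain ⟨a, ha, b, hb, hab, hfab⟩ := Finset.exists_ne_map_eq_of_card_lt_of_maps_to hcard hfF
  have : dist a b ≤ 2 * r := calc
    dist a b ≤ dist a (f a) + dist b (f b) := by
      rw [hfab]; exact dist_triangle_right a b (f b)
    _ ≤ 2 * r := by linarith [hfdist a ha, hfdist b hb]
  linarith [packRad_le_half_dist (A := (Z : Set _)) ha hb hab]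

lemma packRadStar_le_of_forall_exists_dist_le {F : Finset (EuclideanSpace ℝ (Fin d))}
    {n : ℕ} (hn : F.card < n) (hr : 0 ≤ r) (hcov : ∀ y ∈ X, ∃ w ∈ F, dist y w ≤ r) :
    packRadStar X n ≤ r := by
  refine Real.sSup_le ?_ hr
  rintro _ ⟨Z, hZX, rfl, rfl⟩
  exact packRad_le_of_card_lt hn fun z hz => hcov z (hZX hz)

end PackingRadius

section CoffeeHouse

variable {α : Type*} [MetricSpace α] {X : Set α} {x : ℕ → α}

structure IsCoffeeHouse (X : Set α) (x : ℕ → α) : Prop where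
  zero_mem : x 0 ∈ X
  greedy : ∀ n : ℕ, 1 ≤ n → x n ∈ X ∧ ∀ y ∈ X,
    infDist y (x '' Iio n) ≤ infDist (x n) (x '' Iio n)

namespace IsCoffeeHouse

lemma mem (hx : IsCoffeeHouse X x) (k : ℕ) : x k ∈ X := by
  cases k with
  | zero => exact hx.zero_mem
  | succ k => exact (hx.greedy (k + 1) (Nat.le_add_left 1 k)).1

lemma infDist_le (hx : IsCoffeeHouse X x) {m : ℕ} (hm : 1 ≤ m) {y : α} (hy : y ∈ X) :
    infDist y (x '' Iio m) ≤ infDist (x m) (x '' Iio m) :=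
  (hx.greedy m hm).2 y hy

lemma antitoneOn_infDist (hx : IsCoffeeHouse X x) :
    AntitoneOn (fun m => infDist (x m) (x '' Iio m)) (Ici 1) := by
  refine antitoneOn_nat_Ici_of_succ_le fun m (hm : 1 ≤ m) => ?_
  calc infDist (x (m + 1)) (x '' Iio (m + 1))
      ≤ infDist (x (m + 1)) (x '' Iio m) :=
        infDist_le_infDist_of_subset (image_mono (Iio_subset_Iio m.le_succ))
          ⟨x 0, mem_image_of_mem x hm⟩
    _ ≤ infDist (x m) (x '' Iio m) := hx.infDist_le hm (hx.mem (m + 1))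

lemma infDist_le_dist (hx : IsCoffeeHouse X x) {m i j : ℕ} (hi : i ≤ m) (hj : j ≤ m)
    (hij : x i ≠ x j) : infDist (x m) (x '' Iio m) ≤ dist (x i) (x j) := by
  wlog hji : j < i generalizing i j
  · rw [dist_comm]
    exact this hj hi hij.symm ((Nat.lt_or_gt_of_ne (ne_of_apply_ne x hij)).resolve_right hji)
  calc infDist (x m) (x '' Iio m) ≤ infDist (x i) (x '' Iio i) :=
        hx.antitoneOn_infDist (Nat.one_le_of_lt hji) (Nat.one_le_of_lt (hji.trans_le hi)) hi
    _ ≤ dist (x i) (x j) := infDist_le_dist_of_mem (mem_image_of_mem x hji)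

lemma exists_dist_le [DecidableEq α] (hx : IsCoffeeHouse X x) {m : ℕ} (hm : 1 ≤ m) {y : α}
    (hy : y ∈ X) :
    ∃ w ∈ (Finset.range m).image x, dist y w ≤ infDist (x m) (x '' Iio m) := by
  obtain ⟨w, hw, hyw⟩ := ((finite_Iio m).image x).isCompact.exists_infDist_eq_dist
    ⟨x 0, mem_image_of_mem x hm⟩ y
  refine ⟨w, by simpa using hw, hyw ▸ hx.infDist_le hm hy⟩

/-- While points of `X` remain outside `x '' Iio n`, greediness puts `x n` at positive distance
from it. -/
lemma injective (hx : IsCoffeeHouse X x) (hX : X.Infinite) : Function.Injective x := by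
  have hfresh : ∀ n, 1 ≤ n → x n ∉ x '' Iio n := by
    intro n hn hmem
    have hS : IsClosed (x '' Iio n) := ((finite_Iio n).image x).isClosed
    have hne : (x '' Iio n).Nonempty := ⟨x 0, mem_image_of_mem x hn⟩
    obtain ⟨y, hyX, hyS⟩ := (hX.sdiff ((finite_Iio n).image x)).nonempty
    have hpos := (hS.notMem_iff_infDist_pos hne).1 hyS
    linarith [hx.infDist_le hn hyX, infDist_zero_of_mem hmem]
  intro i j hij
  by_contra hne
  rcases Nat.lt_or_gt_of_ne hne with h | h
  · exact hfresh j (Nat.one_le_of_lt h) ⟨i, h, hij⟩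
  · exact hfresh i (Nat.one_le_of_lt h) ⟨j, h, hij.symm⟩

end IsCoffeeHouse

end CoffeeHouse

lemma IsCoffeeHouse.half_infDist_le_packRad {d : ℕ} {X : Set (EuclideanSpace ℝ (Fin d))}
    {x : ℕ → EuclideanSpace ℝ (Fin d)} (hx : IsCoffeeHouse X x) (m : ℕ) :
    infDist (x m) (x '' Iio m) / 2 ≤ packRad (x '' Iio (m + 1)) := by
  rcases le_or_gt (infDist (x m) (x '' Iio m)) 0 with hr | hr
  · linarith [packRad_nonneg (A := x '' Iio (m + 1))]
  have hm : 0 < m := Nat.pos_of_ne_zero (by rintro rfl; simp at hr)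
  have hm0 : x m ≠ x 0 := fun h => hr.ne' (infDist_zero_of_mem ⟨0, hm, h.symm⟩)
  refine half_le_packRad ⟨x m, mem_image_of_mem x m.lt_succ_self, x 0,
    mem_image_of_mem x m.succ_pos, hm0⟩ ?_
  rintro _ ⟨i, hi, rfl⟩ _ ⟨j, hj, rfl⟩ hij
  exact hx.infDist_le_dist (Nat.le_of_lt_succ hi) (Nat.le_of_lt_succ hj) hij

/-- **50% optimality gap of coffee-house design for the packing radius.**  If `X_n` is
the `n`-point prefix of a coffee-house (greedy maximin) sequence in a compact `X ⊂ ℝ^d`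
with nonempty interior, then `PR*_n / 2 ≤ PR(X_n) ≤ PR*_n` for all `n ≥ 2`, irrespective
of the choice of the first point. -/
theorem coffeeHouse_packRad_half_efficiency {d : ℕ}
    (X : Set (EuclideanSpace ℝ (Fin d))) (hX : IsCompact X)
    (hint : (interior X).Nonempty)
    (x : ℕ → EuclideanSpace ℝ (Fin d)) (hx0 : x 0 ∈ X)
    (hgreedy : ∀ n : ℕ, 1 ≤ n → x n ∈ X ∧ ∀ y ∈ X,
      infDist y (x '' Set.Iio n) ≤ infDist (x n) (x '' Set.Iio n)) :
    ∀ n : ℕ, 2 ≤ n →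
      packRadStar X n / 2 ≤ packRad (x '' Set.Iio n) ∧
      packRad (x '' Set.Iio n) ≤ packRadStar X n := by
  classical
  intro n hn
  obtain ⟨m, rfl⟩ : ∃ m, n = m + 1 := ⟨n - 1, by omega⟩
  have hx : IsCoffeeHouse X x := ⟨hx0, hgreedy⟩
  have hstar : packRadStar X (m + 1) ≤ infDist (x m) (x '' Iio m) :=
    packRadStar_le_of_forall_exists_dist_le (Finset.card_image_le.trans_lt (by simp))
      infDist_nonneg fun _ hy => hx.exists_dist_le (by omega) hy
  refine ⟨by linarith [hx.half_infDist_le_packRad m], ?_⟩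
  rcases subsingleton_or_nontrivial (EuclideanSpace ℝ (Fin d)) with hE | hE
  · rw [packRad_eq_zero_of_subsingleton subsingleton_of_subsingleton]
    exact packRadStar_nonneg
  obtain ⟨c, hc⟩ := hint
  have hinj := hx.injective (infinite_of_mem_nhds c (mem_interior_iff_mem_nhds.1 hc))
  have hXm : ↑((Finset.range (m + 1)).image x) ⊆ X := by
    simpa [subset_def] using fun i _ => hx.mem i
  simpa [Finset.card_image_of_injective _ hinj] using
    packRad_le_packRadStar hX.isBounded hXm
end

section
/- Let q > 0, let X_Q be a nonempty finite subset of ℝ^d, and let S be a finite subset of ℝ^d disjoint from X_Q (the candidate set). For a nonempty subset Z ⊆ S define G(Z) = Σ_{x ∈ X_Q} ( Σ_{z ∈ Z} ‖z − x‖^{−q} )^{−1}. Then G is non-increasing (G(A ∪ {x}) ≤ G(A) for nonempty A ⊆ S and x ∈ S) and supermodular: for all nonempty A ⊆ B ⊆ S and every x ∈ S \ B, G(A ∪ {x}) − G(A) ≤ G(B ∪ {x}) − G(B). -/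
/-- The (un-normalized, discretized) relaxed covering criterion
`G(Z) = Σ_{x ∈ X_Q} (Σ_{z ∈ Z} ‖z − x‖^{−q})⁻¹`. -/
noncomputable def relaxedCovering {d : ℕ} (q : ℝ)
    (XQ : Finset (EuclideanSpace ℝ (Fin d)))
    (Z : Finset (EuclideanSpace ℝ (Fin d))) : ℝ :=
  ∑ x ∈ XQ, (∑ z ∈ Z, dist z x ^ (-q))⁻¹

private lemma key_ineq (a b c : ℝ) (ha : 0 < a) (hab : a ≤ b) (hc : 0 < c) :
    (c+a)⁻¹ - a⁻¹ ≤ (c+b)⁻¹ - b⁻¹ := by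
  have hb : 0 < b := ha.trans_le hab
  have hac : 0 < c + a := by linarith
  have hbc : 0 < c + b := by linarith
  rw [inv_sub_inv hac.ne' ha.ne', inv_sub_inv hbc.ne' hb.ne']
  rw [div_le_div_iff₀ (by positivity) (by positivity)]
  ring_nf
  nlinarith [mul_pos ha hb, mul_pos hb hc, mul_pos ha hc]

/-- **The discretized relaxed covering criterion is non-increasing and supermodular.**
Let `q > 0`, let `X_Q ⊂ ℝ^d` be a nonempty finite evaluation set and `S ⊂ ℝ^d` a finite
candidate set disjoint from `X_Q`.  Then `G(Z) = Σ_{x∈X_Q} (Σ_{z∈Z} ‖z−x‖^{−q})⁻¹`,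
defined on nonempty subsets `Z ⊆ S`, is non-increasing and supermodular:
`G(A ∪ {x}) − G(A) ≤ G(B ∪ {x}) − G(B)` for nonempty `A ⊆ B ⊆ S` and `x ∈ S \ B`. -/
theorem relaxedCovering_antitone_supermodular {d : ℕ}
    [DecidableEq (EuclideanSpace ℝ (Fin d))]
    (q : ℝ) (hq : 0 < q)
    (XQ : Finset (EuclideanSpace ℝ (Fin d))) (hXQ : XQ.Nonempty)
    (S : Finset (EuclideanSpace ℝ (Fin d))) (hdisj : Disjoint S XQ) :
    (∀ A : Finset (EuclideanSpace ℝ (Fin d)), A ⊆ S → A.Nonempty → ∀ x ∈ S,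
      relaxedCovering q XQ (insert x A) ≤ relaxedCovering q XQ A) ∧
    (∀ A B : Finset (EuclideanSpace ℝ (Fin d)), A ⊆ B → B ⊆ S → A.Nonempty →
      ∀ x ∈ S, x ∉ B →
      relaxedCovering q XQ (insert x A) - relaxedCovering q XQ A ≤
        relaxedCovering q XQ (insert x B) - relaxedCovering q XQ B) := by
  -- positivity of weights
  have hw : ∀ z ∈ S, ∀ y ∈ XQ, 0 < dist z y ^ (-q) := by
    intro z hz y hy
    have hne : z ≠ y := by
      rintro rfl
      exact (Finset.disjoint_left.mp hdisj hz) hy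
    exact Real.rpow_pos_of_pos (dist_pos.mpr hne) _
  have hsum : ∀ (A : Finset (EuclideanSpace ℝ (Fin d))), A ⊆ S → A.Nonempty →
      ∀ y ∈ XQ, 0 < ∑ z ∈ A, dist z y ^ (-q) := by
    intro A hAS hA y hy
    exact Finset.sum_pos (fun z hz => hw z (hAS hz) y hy) hA
  constructor
  · intro A hAS hA x hx
    by_cases hxA : x ∈ A
    · simp [Finset.insert_eq_self.mpr hxA]
    · unfold relaxedCovering
      apply Finset.sum_le_sum
      intro y hy
      rw [Finset.sum_insert hxA]
      have h1 := hsum A hAS hA y hy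
      have h2 := hw x hx y hy
      exact inv_anti₀ h1 (by linarith)
  · intro A B hAB hBS hA x hx hxB
    have hxA : x ∉ A := fun h => hxB (hAB h)
    have hAS : A ⊆ S := hAB.trans hBS
    unfold relaxedCovering
    rw [← Finset.sum_sub_distrib, ← Finset.sum_sub_distrib]
    apply Finset.sum_le_sum
    intro y hy
    rw [Finset.sum_insert hxA, Finset.sum_insert hxB]
    have ha := hsum A hAS hA y hy
    have hab : ∑ z ∈ A, dist z y ^ (-q) ≤ ∑ z ∈ B, dist z y ^ (-q) :=
      Finset.sum_le_sum_of_subset_of_nonneg hAB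
        (fun z hz _ => (hw z (hBS hz) y hy).le)
    have hc := hw x hx y hy
    exact key_ineq _ _ _ ha hab hc
end
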